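/- arXiv:math/0606250 — 4 statements merged into one kernel-verified Lean document; each statement's English description precedes it below -/
import Mathlib

section
/- Let k be a field of characteristic 0 and A = k[[t]] with maximal ideal m = (t). A k-linear map l : m → k is continuous (for the m-adic topology on m and the discrete topology on k) if and only if there exists ν ≥ 0 and f ∈ t^{-ν}A/A such that l(g) = Res(f · dg) for all g ∈ m. -/
/-!
A continuous `l` kills `m ^ N` for some `N`, so it is determined by the finitely many values
`l (t ^ (n + 1))`, `n < N`. On the other hand, for a Laurent series `f` with no terms below
`t ^ (-ν)`, `Res (f · dg) = ∑_{n < ν} f₋ₙ₋₁ (n + 1) gₙ₊₁`, which only sees the first `ν + 1`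
coefficients of `g`. Matching the two expansions means taking `f₋ₙ₋₁ = l (t ^ (n + 1)) / (n + 1)`,
which is where characteristic zero enters.
-/

open PowerSeries Filter Topology

theorem AddMonoidHom.continuous_iff_ker_mem_nhds_zero {G B : Type*} [TopologicalSpace G]
    [AddGroup G] [IsTopologicalAddGroup G] [TopologicalSpace B] [DiscreteTopology B] [AddGroup B]
    (f : G →+ B) : Continuous f ↔ (f : G → B) ⁻¹' {0} ∈ 𝓝 0 := by
  refine ⟨fun h => h.continuousAt.preimage_mem_nhds ?_,
    fun h => continuous_of_continuousAt_zero f ?_⟩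
  · simp
  · rwa [ContinuousAt, nhds_discrete B, map_zero, tendsto_pure]

theorem Ideal.adicTopology_continuous_iff_exists_pow {A B : Type*} [CommRing A] [AddGroup B]
    [TopologicalSpace B] [DiscreteTopology B] (I J : Ideal A) (f : J →+ B) :
    letI := I.adicTopology
    Continuous f ↔ ∃ N : ℕ, ∀ g : J, (g : A) ∈ I ^ N → f g = 0 := by
  let := I.adicTopology
  rw [f.continuous_iff_ker_mem_nhds_zero, nhds_subtype, ZeroMemClass.coe_zero,
    ((I.hasBasis_nhds_zero_adic).comap _).mem_iff]
  simp [Set.subset_def]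

theorem PowerSeries.X_pow_succ_mem_span_X {R : Type*} [CommRing R] (n : ℕ) :
    (X : R⟦X⟧) ^ (n + 1) ∈ Ideal.span {X} :=
  Ideal.mem_span_singleton.mpr (dvd_pow_self X n.succ_ne_zero)

theorem PowerSeries.eq_sum_coeff_smul_of_forall_X_pow_dvd {R M : Type*} [CommRing R]
    [AddCommGroup M] [Module R M] (l : Ideal.span {(X : R⟦X⟧)} →ₗ[R] M) {N : ℕ}
    (hl : ∀ g : Ideal.span {(X : R⟦X⟧)}, X ^ N ∣ (g : R⟦X⟧) → l g = 0)
    (g : Ideal.span {(X : R⟦X⟧)}) :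
    l g = ∑ n ∈ Finset.range N,
      coeff (n + 1) (g : R⟦X⟧) • l ⟨X ^ (n + 1), X_pow_succ_mem_span_X n⟩ := by
  set T : Ideal.span {(X : R⟦X⟧)} :=
    ∑ n ∈ Finset.range N, coeff (n + 1) (g : R⟦X⟧) • ⟨X ^ (n + 1), X_pow_succ_mem_span_X n⟩
  have hg0 : constantCoeff (g : R⟦X⟧) = 0 := X_dvd_iff.mp (Ideal.mem_span_singleton.mp g.2)
  have hT : X ^ N ∣ ((g - T : Ideal.span {(X : R⟦X⟧)}) : R⟦X⟧) := by
    rw [X_pow_dvd_iff]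
    intro i hi
    rcases i with _ | i
    · simpa [T, coeff_X_pow] using hg0
    · simp [T, coeff_X_pow, Finset.mem_range.mpr (Nat.lt_of_succ_lt hi)]
  have hlg : l g = l T := by
    rw [← sub_eq_zero, ← map_sub]
    exact hl _ hT
  simp only [hlg, T, map_sum, map_smul]

namespace LaurentSeries

theorem coeff_neg_one_mul_coe_powerSeries {R : Type*} [Semiring R] {f : R⸨X⸩} {ν : ℕ}
    (hf : ∀ n : ℤ, n < -ν → f.coeff n = 0) (D : R⟦X⟧) :
    (f * D).coeff (-1) = ∑ n ∈ Finset.range ν, f.coeff (-n - 1) * coeff n D := by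
  have hsupp : ∀ ij ∈ Finset.antidiagonal f.isPWO_support (D : R⸨X⸩).isPWO_support (-1),
      f.coeff ij.1 * (D : R⸨X⸩).coeff ij.2 ≠ 0 → ∃ n < ν, ij = ((-n - 1 : ℤ), (n : ℤ)) := by
    rintro ⟨i, j⟩ hij hne
    have hi : ¬ i < -ν := fun h => hne (by rw [hf i h, zero_mul])
    have hj : ¬ j < 0 := fun h => hne (by simp [coeff_coe, h])
    have hij := (Finset.mem_antidiagonal.mp hij).2.2
    exact ⟨j.toNat, by omega, by ext <;> simp <;> omega⟩
  rw [HahnSeries.coeff_mul]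
  refine Finset.sum_bij_ne_zero (fun ij _ _ => ij.2.toNat) ?_ ?_ ?_ ?_
  · intro ij hij hne
    obtain ⟨n, hn, rfl⟩ := hsupp ij hij hne
    simpa using hn
  · intro ij hij hne ij' hij' hne' h
    obtain ⟨n, -, rfl⟩ := hsupp ij hij hne
    obtain ⟨n', -, rfl⟩ := hsupp ij' hij' hne'
    simp_all
  · intro n _ hne
    refine ⟨((-n - 1 : ℤ), (n : ℤ)), ?_, ?_, by simp⟩
    · simp only [Finset.mem_antidiagonal]
      exact ⟨left_ne_zero_of_mul hne, by simpa using right_ne_zero_of_mul hne, by ring⟩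
    · simpa using hne
  · intro ij hij hne
    obtain ⟨n, -, rfl⟩ := hsupp ij hij hne
    simp

theorem exists_coeff_neg_eq {R : Type*} [Semiring R] (a : ℕ → R) (ν : ℕ) :
    ∃ f : R⸨X⸩, (∀ n : ℤ, n < -ν → f.coeff n = 0) ∧ ∀ n < ν, f.coeff (-n - 1) = a n := by
  refine ⟨∑ n ∈ Finset.range ν, HahnSeries.single (-n - 1 : ℤ) (a n),
    fun i hi => ?_, fun n hn => ?_⟩
  · rw [HahnSeries.coeff_sum]
    refine Finset.sum_eq_zero fun n hn => HahnSeries.coeff_single_of_ne ?_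
    simp at hn; omega
  · rw [HahnSeries.coeff_sum, Finset.sum_eq_single_of_mem n (Finset.mem_range.mpr hn)]
    · simp
    · intro j _ hjn
      exact HahnSeries.coeff_single_of_ne (by omega)

theorem coeff_neg_one_mul_derivative {R : Type*} [CommSemiring R] {f : R⸨X⸩}
    {ν : ℕ} (hf : ∀ n : ℤ, n < -ν → f.coeff n = 0) (g : R⟦X⟧) :
    (f * (d⁄dX R g : R⸨X⸩)).coeff (-1) =
      ∑ n ∈ Finset.range ν, f.coeff (-n - 1) * (coeff (n + 1) g * (n + 1)) := by
  simp only [coeff_neg_one_mul_coe_powerSeries hf, coeff_derivative]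

end LaurentSeries

theorem continuous_iff_residue_representation
    (k : Type*) [Field k] [CharZero k]
    (m : Ideal (PowerSeries k)) (hm : m = Ideal.span {X})
    (l : ↥m →ₗ[k] k) :
    letI : TopologicalSpace (PowerSeries k) := m.adicTopology
    letI : TopologicalSpace k := ⊥
    Continuous l ↔
      ∃ (ν : ℕ) (f : LaurentSeries k),
        (∀ n : ℤ, n < -(ν : ℤ) → f.coeff n = 0) ∧
        ∀ g : ↥m, l g =
          (f * ((PowerSeries.derivativeFun (g : PowerSeries k) :
            PowerSeries k) : LaurentSeries k)).coeff (-1) := by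
  subst hm
  let : TopologicalSpace k := ⊥
  have : DiscreteTopology k := ⟨rfl⟩
  refine (Ideal.adicTopology_continuous_iff_exists_pow _ _ l.toAddMonoidHom).trans ?_
  simp only [Ideal.span_singleton_pow, Ideal.mem_span_singleton, LinearMap.toAddMonoidHom_coe]
  constructor
  · rintro ⟨N, hN⟩
    obtain ⟨f, hf, hfc⟩ := LaurentSeries.exists_coeff_neg_eq
      (fun n => l ⟨X ^ (n + 1), X_pow_succ_mem_span_X n⟩ / (n + 1)) N
    refine ⟨N, f, hf, fun g => ?_⟩
    refine (eq_sum_coeff_smul_of_forall_X_pow_dvd l hN g).trans <|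
      Eq.trans ?_ (LaurentSeries.coeff_neg_one_mul_derivative hf g).symm
    refine Finset.sum_congr rfl fun n hn => ?_
    rw [hfc n (Finset.mem_range.mp hn), smul_eq_mul]
    field_simp [Nat.cast_add_one_ne_zero n]
  · rintro ⟨ν, f, hf, hl⟩
    refine ⟨ν + 1, fun g hg => ?_⟩
    refine (hl g).trans <| (LaurentSeries.coeff_neg_one_mul_derivative hf g).trans ?_
    refine Finset.sum_eq_zero fun n hn => ?_
    rw [X_pow_dvd_iff.mp hg (n + 1) (by simpa using hn), zero_mul, mul_zero]
end

section
/- Let ψ : C ⇢ G be a rational map from a smooth projective curve C over an algebraically closed field k to a commutative algebraic group G, and suppose ψ admits a modulus d supported on the finite set S where ψ is not regular. Then the associated local symbol is given explicitly by: (ψ,f)_c = v_c(f)·ψ(c) for c ∉ S, and (ψ,f)_s = −Σ_{c ∉ S} v_c(f_s)·ψ(c) for s ∈ S, where f_s ∈ K_C^* is any rational function with f_s ≡ 1 mod d at every point of S except s, and f/f_s ≡ 1 mod d at s. -/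
/- STATEMENT 10: Explicit formula for the local symbol.  Let ψ : C ⇢ G be a
rational map from a smooth projective curve C over an algebraically closed
field k (function field K, valuations v) to a commutative algebraic group G,
with a modulus d supported on the finite irregularity set S.  Then the
associated local symbol satisfies (ψ,f)_c = v_c(f)·ψ(c) for c ∉ S, and
(ψ,f)_s = -Σ_{c ∉ S} v_c(f_s)·ψ(c) for s ∈ S, where f_s is any rational
function with f_s ≡ 1 mod d at every point of S except s and f/f_s ≡ 1
mod d at s. -/

theorem local_symbol_explicit_formula
    (k K C G : Type*) [Field k] [IsAlgClosed k] [Field K] [Algebra k K]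
    [AddCommGroup G]
    (v : C → K → ℤ)
    (hv_mul : ∀ p (f g : K), f ≠ 0 → g ≠ 0 → v p (f * g) = v p f + v p g)
    (hv_fin : ∀ f : K, f ≠ 0 → {p | v p f ≠ 0}.Finite)
    (ψ : C → G) (S : Finset C)
    (d : C → ℕ) (hd : ∀ p, d p ≠ 0 → p ∈ S)
    (sym : Kˣ → C → G)
    -- the four axioms of the local symbol associated to ψ and d:
    (ha : ∀ f g p, sym (f * g) p = sym f p + sym g p)
    (hb : ∀ (f : Kˣ) c, c ∉ S → sym f c = v c (f : K) • ψ c)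
    (hc : ∀ (f : Kˣ) (s : C), s ∈ S → (d s : ℤ) ≤ v s ((f : K) - 1) →
      sym f s = 0)
    (hsum : ∀ f, (Function.support (sym f)).Finite ∧ ∑ᶠ p, sym f p = 0)
    (f : Kˣ) (s : C) (hs : s ∈ S)
    (fs : Kˣ)
    (hfs₁ : ∀ z ∈ S, z ≠ s → (d z : ℤ) ≤ v z ((fs : K) - 1))
    (hfs₂ : (d s : ℤ) ≤ v s (((f * fs⁻¹ : Kˣ) : K) - 1)) :
    (∀ c ∉ S, sym f c = v c (f : K) • ψ c) ∧
    sym f s = -∑ᶠ c ∈ ({c : C | c ∉ S} : Set C), v c (fs : K) • ψ c := by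
  refine ⟨fun c hcS => hb f c hcS, ?_⟩
  have h1 : sym f s = sym fs s := by
    have hf : f = (f * fs⁻¹) * fs := by group
    have := ha (f * fs⁻¹) fs s
    rw [← hf, hc _ s hs hfs₂, zero_add] at this
    exact this
  obtain ⟨hfin, hzero⟩ := hsum fs
  have hsplit : (∑ᶠ p ∈ ({s} : Set C), sym fs p)
      + ∑ᶠ p ∈ (({s} : Set C)ᶜ), sym fs p = 0 := by
    rw [← finsum_mem_union' disjoint_compl_right
      (hfin.subset Set.inter_subset_right) (hfin.subset Set.inter_subset_right),
      Set.union_compl_self, finsum_mem_univ, hzero]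
  rw [finsum_mem_singleton] at hsplit
  have h2 : ∑ᶠ p ∈ (({s} : Set C)ᶜ), sym fs p
      = ∑ᶠ p ∈ ({c : C | c ∉ S} : Set C), sym fs p := by
    apply finsum_mem_inter_support_eq'
    intro x hx
    simp only [Set.mem_compl_iff, Set.mem_singleton_iff, Set.mem_setOf_eq]
    constructor
    · intro hxs hxS
      exact hx (hc fs x hxS (hfs₁ x hxS hxs))
    · intro hxS hxs
      exact hxS (hxs ▸ hs)
  have h3 : ∑ᶠ p ∈ ({c : C | c ∉ S} : Set C), sym fs p
      = ∑ᶠ c ∈ ({c : C | c ∉ S} : Set C), v c (fs : K) • ψ c :=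
    finsum_mem_congr rfl fun x hx => hb fs x hx
  rw [h1, ← h3, ← h2]
  exact eq_neg_of_add_eq_zero_left hsplit
end

section
/- Let Y be a noetherian k-scheme and R a k-algebra with nilradical Nil(R), and let R_nil = k + Nil(R). Then there is a canonical isomorphism of abelian groups Inf(Div_Y)(R) ≅ Γ(Y, K_Y/O_Y) ⊗_k Nil(R), where Inf(Div_Y)(R) is the kernel of Div_Y(R_nil) → Div_Y(k) induced by the augmentation R_nil → k. In particular Lie(Div_Y) ≅ Γ(Y, K_Y/O_Y). -/
/-!
Write `ε_B : B ⊗ R → B` for the augmentation induced by `ρ`. Since `k` is a field, tensoring is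
exact, so `ker ε_B = B ⊗ Nil(R)`, a nil ideal. A unit of `K ⊗ R` whose class dies in `Kˣ / Aˣ`
can be corrected by the image of a unit of `A` (through `A → A ⊗ R`) to satisfy `ε_K u = 1`, i.e.
`u ∈ 1 + K ⊗ Nil(R)`. On a nil ideal of a `ℚ`-algebra the exponential is a bijection onto the
principal units `1 + I` turning sums into products, and injectivity of `A → K` shows that a unit
of `A ⊗ R` mapping into `1 + K ⊗ Nil(R)` lies in `1 + A ⊗ Nil(R)`. Hence the kernel is
`(K ⊗ Nil(R)) / (A ⊗ Nil(R)) ≅ (K / A) ⊗ Nil(R)` by right exactness of `⊗ Nil(R)`.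
-/

namespace IsNilpotent

section Ring

variable {S : Type*} [Ring S] [Module ℚ S]

noncomputable def expUnit {a : S} (ha : IsNilpotent a) : Sˣ :=
  ⟨exp a, exp (-a), exp_mul_exp_neg_self ha, exp_neg_mul_exp_self ha⟩

@[simp]
theorem val_expUnit {a : S} (ha : IsNilpotent a) : (ha.expUnit : S) = exp a := rfl

end Ring

variable {S : Type*} [CommRing S] [Module ℚ S]

theorem exists_exp_eq_one_add_add_sq_mul {x : S} (hx : IsNilpotent x) :
    ∃ s, exp x = 1 + x + x ^ 2 * s := by
  obtain ⟨m, hm⟩ := hx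
  refine ⟨∑ i ∈ Finset.range m, ((i + 2).factorial : ℚ)⁻¹ • x ^ i, ?_⟩
  rw [exp_eq_sum (pow_eq_zero_of_le (Nat.le_add_right m 2) hm), Finset.sum_range_succ',
    Finset.sum_range_succ', Finset.mul_sum]
  have hterm : ∀ i ∈ Finset.range m, ((i + 1 + 1).factorial : ℚ)⁻¹ • x ^ (i + 1 + 1) =
      x ^ 2 * (((i + 2).factorial : ℚ)⁻¹ • x ^ i) := fun i _ => by
    rw [mul_smul_comm, ← pow_add, add_comm 2 i]
  rw [Finset.sum_congr rfl hterm]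
  simp only [zero_add, pow_one, pow_zero, Nat.factorial_zero, Nat.factorial_one, Nat.cast_one,
    inv_one, one_smul]
  abel

theorem exp_sub_one_mem {I : Ideal S} {x : S} (hx : IsNilpotent x) (hxI : x ∈ I) :
    exp x - 1 ∈ I := by
  obtain ⟨s, hs⟩ := hx.exists_exp_eq_one_add_add_sq_mul
  rw [hs, add_assoc, add_sub_cancel_left]
  exact I.add_mem hxI (I.mul_mem_right s (I.pow_mem_of_mem hxI 2 two_pos))

theorem eq_zero_of_exp_eq_one {x : S} (hx : IsNilpotent x) (h : exp x = 1) : x = 0 := by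
  obtain ⟨s, hs⟩ := hx.exists_exp_eq_one_add_add_sq_mul
  have hxs : x * (1 + x * s) = 0 := by linear_combination hs.symm.trans h
  exact (((Commute.all x s).isNilpotent_mul_right hx).isUnit_one_add.mul_left_eq_zero).mp hxs

theorem exp_inj {a b : S} (ha : IsNilpotent a) (hb : IsNilpotent b) :
    exp a = exp b ↔ a = b := by
  refine ⟨fun h => sub_eq_zero.mp ?_, congrArg exp⟩
  refine eq_zero_of_exp_eq_one ((Commute.all a b).isNilpotent_sub ha hb) ?_
  rw [sub_eq_add_neg, exp_add_of_commute (Commute.all _ _) ha hb.neg, h,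
    exp_mul_exp_neg_self hb]

theorem exists_mem_exp_eq_one_add {I : Ideal S} (hI : I ≤ nilradical S) {t : S} (ht : t ∈ I) :
    ∃ a ∈ I, exp a = 1 + t := by
  suffices key : ∀ n : ℕ, ∀ t ∈ I, t ^ 2 ^ n = 0 → ∃ a ∈ I, exp a = 1 + t by
    obtain ⟨n, hn⟩ := hI ht
    exact key n t ht (pow_eq_zero_of_le n.lt_two_pow_self.le hn)
  intro n
  induction n with
  | zero => intro t _ h; exact ⟨0, I.zero_mem, by simp_all⟩
  | succ n ih =>
    intro t ht h
    have htn : IsNilpotent t := ⟨_, h⟩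
    obtain ⟨s, hs⟩ := htn.neg.exists_exp_eq_one_add_add_sq_mul
    -- `(1 + t) * exp (-t) - 1 = t ^ 2 * (s - 1 + t * s)` has half the nilpotency order of `t`
    obtain ⟨a, ha, hexp⟩ := ih (t ^ 2 * (s - 1 + t * s))
      (I.mul_mem_right _ (I.pow_mem_of_mem ht 2 two_pos))
      (by rw [mul_pow, ← pow_mul, ← pow_succ', h, zero_mul])
    refine ⟨t + a, I.add_mem ht ha, ?_⟩
    rw [exp_add_of_commute (Commute.all _ _) htn (hI ha), hexp]
    calc exp t * (1 + t ^ 2 * (s - 1 + t * s)) = exp t * exp (-t) * (1 + t) := by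
          rw [hs]; ring
      _ = 1 + t := by rw [exp_mul_exp_neg_self htn, one_mul]

theorem map_exp_eq_one_of_mem_ker {T : Type*} [Ring T] (f : S →+* T) {a : S}
    (ha : IsNilpotent a) (hker : a ∈ RingHom.ker f) : f (exp a) = 1 :=
  ((RingHom.sub_mem_ker_iff f).mp (ha.exp_sub_one_mem hker)).trans f.map_one

end IsNilpotent

theorem QuotientGroup.exists_mk_eq_of_mem_ker_map {G H : Type*} [Group G] [Group H]
    {N : Subgroup G} [N.Normal] {M : Subgroup H} [M.Normal] (f : G →* H)
    (hNM : N ≤ M.comap f) (hMN : M ≤ N.map f) {x : G ⧸ N}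
    (hx : x ∈ (QuotientGroup.map N M f hNM).ker) : ∃ g ∈ f.ker, (g : G ⧸ N) = x := by
  obtain ⟨g, rfl⟩ := QuotientGroup.mk_surjective x
  rw [MonoidHom.mem_ker, QuotientGroup.map_mk, QuotientGroup.eq_one_iff] at hx
  obtain ⟨n, hn, hfn⟩ := hMN hx
  refine ⟨g * n⁻¹, by simp [hfn], QuotientGroup.eq.mpr ?_⟩
  simpa using hn

theorem AddMonoidHom.nonempty_mulEquiv_of_ker_eq {M G Q : Type*} [AddGroup M] [Group G]
    [AddGroup Q] (θ : M →+ Additive G) (q : M →+ Q) (hθ : Function.Surjective θ)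
    (hq : Function.Surjective q) (h : θ.ker = q.ker) : Nonempty (G ≃* Multiplicative Q) :=
  ⟨AddEquiv.toMultiplicativeRight <|
    (QuotientAddGroup.quotientKerEquivOfSurjective θ hθ).symm.trans <|
      (QuotientAddGroup.quotientAddEquivOfEq h).trans <|
        QuotientAddGroup.quotientKerEquivOfSurjective q hq⟩

section UnitsCokernel

open RingHom IsNilpotent

variable {S T B C : Type*} [CommRing S] [CommRing T] [CommRing B] [CommRing C]
  (ι : S →+* T) (εS : S →+* B) (εT : T →+* C) (α : B →+* C)

theorem range_unitsMap_le_comap (hcomm : εT.comp ι = α.comp εS) :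
    (Units.map (ι : S →* T)).range ≤
      ((Units.map (α : B →* C)).range).comap (Units.map (εT : T →* C)) := by
  rintro _ ⟨s, rfl⟩
  exact ⟨Units.map (εS : S →* B) s, Units.ext (RingHom.congr_fun hcomm s).symm⟩

theorem range_unitsMap_le_map (hcomm : εT.comp ι = α.comp εS)
    (hεS : Function.Surjective (Units.map (εS : S →* B))) :
    (Units.map (α : B →* C)).range ≤
      ((Units.map (ι : S →* T)).range).map (Units.map (εT : T →* C)) := by
  rintro _ ⟨b, rfl⟩
  obtain ⟨s, rfl⟩ := hεS b
  exact ⟨Units.map (ι : S →* T) s, ⟨s, rfl⟩, Units.ext (RingHom.congr_fun hcomm s)⟩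

abbrev unitsCokernelMap (hcomm : εT.comp ι = α.comp εS) :
    Tˣ ⧸ (Units.map (ι : S →* T)).range →* Cˣ ⧸ (Units.map (α : B →* C)).range :=
  QuotientGroup.map _ _ (Units.map (εT : T →* C)) (range_unitsMap_le_comap ι εS εT α hcomm)

variable [Module ℚ T] {ι εS εT α}

theorem exists_expUnit_eq_of_mem_ker (hcomm : εT.comp ι = α.comp εS)
    (hεS : Function.Surjective (Units.map (εS : S →* B))) (hT : ker εT ≤ nilradical T)
    {x : Tˣ ⧸ (Units.map (ι : S →* T)).range}
    (hx : x ∈ (unitsCokernelMap ι εS εT α hcomm).ker) :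
    ∃ (a : T) (ha : a ∈ ker εT),
      (expUnit (mem_nilradical.mp (hT ha)) : Tˣ ⧸ (Units.map (ι : S →* T)).range) = x := by
  obtain ⟨u, hu, rfl⟩ := QuotientGroup.exists_mk_eq_of_mem_ker_map _ _
    (range_unitsMap_le_map ι εS εT α hcomm hεS) hx
  have hu1 : (u : T) - 1 ∈ ker εT :=
    (sub_mem_ker_iff εT).mpr (by simpa [Units.ext_iff] using hu)
  obtain ⟨a, ha, hexp⟩ := exists_mem_exp_eq_one_add hT hu1
  exact ⟨a, ha, congrArg _ (Units.ext (by simp [hexp]))⟩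

variable [Module ℚ S]

theorem mk_expUnit_eq_one_iff (hcomm : εT.comp ι = α.comp εS) (hα : Function.Injective α)
    (hS : ker εS ≤ nilradical S) {a : T} (ha : IsNilpotent a) (haT : a ∈ ker εT) :
    (expUnit ha : Tˣ ⧸ (Units.map (ι : S →* T)).range) = 1 ↔ ∃ b ∈ ker εS, ι b = a := by
  rw [QuotientGroup.eq_one_iff]
  constructor
  · rintro ⟨s, hs⟩
    have hιs : ι s = exp a := congrArg Units.val hs
    have hεs : εS s = 1 := hα <| by
      rw [← RingHom.comp_apply, ← hcomm, RingHom.comp_apply, hιs,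
        map_exp_eq_one_of_mem_ker εT ha haT, map_one]
    obtain ⟨b, hb, hexp⟩ := exists_mem_exp_eq_one_add hS
      ((sub_mem_ker_iff εS).mpr (hεs.trans εS.map_one.symm))
    have hbn : IsNilpotent b := mem_nilradical.mp (hS hb)
    refine ⟨b, hb, (exp_inj (hbn.map ι) ha).mp ?_⟩
    rw [← map_exp hbn ι, hexp, add_sub_cancel, hιs]
  · rintro ⟨b, hb, rfl⟩
    have hbn : IsNilpotent b := mem_nilradical.mp (hS hb)
    exact ⟨expUnit hbn, Units.ext (map_exp hbn ι)⟩

theorem nonempty_ker_unitsCokernelMap_mulEquiv {M Q : Type*} [AddCommGroup M] [AddCommGroup Q]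
    (hcomm : εT.comp ι = α.comp εS) (hα : Function.Injective α)
    (hεS : Function.Surjective (Units.map (εS : S →* B)))
    (hS : ker εS ≤ nilradical S) (hT : ker εT ≤ nilradical T)
    (j : M →+ T) (hj : ∀ t, t ∈ ker εT ↔ t ∈ Set.range j)
    (q : M →+ Q) (hq : Function.Surjective q)
    (hker : ∀ m, q m = 0 ↔ ∃ b ∈ ker εS, ι b = j m) :
    Nonempty ((unitsCokernelMap ι εS εT α hcomm).ker ≃* Multiplicative Q) := by
  have hjT (m : M) : j m ∈ ker εT := (hj _).mpr ⟨m, rfl⟩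
  have hjn (m : M) : IsNilpotent (j m) := mem_nilradical.mp (hT (hjT m))
  have hmem (m : M) : (expUnit (hjn m) : Tˣ ⧸ (Units.map (ι : S →* T)).range) ∈
      (unitsCokernelMap ι εS εT α hcomm).ker := by
    rw [MonoidHom.mem_ker, QuotientGroup.map_mk, QuotientGroup.eq_one_iff]
    exact ⟨1, Units.ext (α.map_one.trans (map_exp_eq_one_of_mem_ker εT (hjn m) (hjT m)).symm)⟩
  let θ : M →+ Additive (unitsCokernelMap ι εS εT α hcomm).ker :=
    AddMonoidHom.mk' (fun m => Additive.ofMul ⟨_, hmem m⟩) fun m m' => by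
      refine congrArg Additive.ofMul (Subtype.ext ?_)
      change (expUnit (hjn (m + m')) : Tˣ ⧸ (Units.map (ι : S →* T)).range) =
        expUnit (hjn m) * expUnit (hjn m')
      rw [← QuotientGroup.mk_mul]
      exact congrArg _ <| Units.ext <| (congrArg exp (map_add j m m')).trans
        (exp_add_of_commute (Commute.all _ _) (hjn m) (hjn m'))
  refine θ.nonempty_mulEquiv_of_ker_eq q (fun x => ?_) hq ?_
  · obtain ⟨a, ha, hx⟩ := exists_expUnit_eq_of_mem_ker hcomm hεS hT x.toMul.2
    obtain ⟨m, rfl⟩ := (hj a).mp ha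
    exact ⟨m, congrArg Additive.ofMul (Subtype.ext hx)⟩
  · ext m
    rw [AddMonoidHom.mem_ker, AddMonoidHom.mem_ker, hker,
      ← mk_expUnit_eq_one_iff hcomm hα hS (hjn m) (hjT m)]
    exact ofMul_eq_zero.trans Subtype.ext_iff

end UnitsCokernel

open TensorProduct

section TensorAugmentation

variable {k R : Type*} [Field k] [CommRing R] [Algebra k R] (ρ : R →ₐ[k] k)

def tensorAugmentation (B : Type*) [CommRing B] [Algebra k B] : B ⊗[k] R →ₐ[k] B :=
  (Algebra.TensorProduct.rid k k B).toAlgHom.comp (Algebra.TensorProduct.map (AlgHom.id k B) ρ)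

variable {ρ} {A B K : Type*} [CommRing A] [Algebra k A] [CommRing B] [Algebra k B]
  [CommRing K] [Algebra k K]

theorem tensorAugmentation_toLinearMap :
    (tensorAugmentation ρ B).toLinearMap =
      (TensorProduct.rid k B).toLinearMap ∘ₗ LinearMap.lTensor B ρ.toLinearMap :=
  TensorProduct.ext' fun b r => by simp [tensorAugmentation]

theorem tensorAugmentation_comp_map (f : A →ₐ[k] K) :
    (tensorAugmentation ρ K).comp (Algebra.TensorProduct.map f (AlgHom.id k R)) =
      f.comp (tensorAugmentation ρ A) := by
  ext <;> simp [tensorAugmentation]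

theorem tensorAugmentation_unitsMap_surjective :
    Function.Surjective (Units.map (tensorAugmentation ρ B : B ⊗[k] R →* B)) := fun b =>
  ⟨Units.map (Algebra.TensorProduct.includeLeft : B →ₐ[k] B ⊗[k] R) b,
    Units.ext (by simp [tensorAugmentation])⟩

theorem apply_eq_zero_iff_isNilpotent (hR : ∀ x : R, IsNilpotent (x - algebraMap k R (ρ x)))
    (x : R) : ρ x = 0 ↔ IsNilpotent x :=
  ⟨fun h => by simpa [h] using hR x, fun h => (h.map ρ).eq_zero⟩

theorem exact_subtype_nilradical (hR : ∀ x : R, IsNilpotent (x - algebraMap k R (ρ x))) :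
    Function.Exact ((nilradical R).restrictScalars k).subtype ρ.toLinearMap := fun x => by
  simp [apply_eq_zero_iff_isNilpotent hR, mem_nilradical]

theorem mem_ker_tensorAugmentation_iff (hR : ∀ x : R, IsNilpotent (x - algebraMap k R (ρ x)))
    (t : B ⊗[k] R) : t ∈ RingHom.ker (tensorAugmentation ρ B) ↔
      t ∈ Set.range (LinearMap.lTensor B ((nilradical R).restrictScalars k).subtype) := by
  rw [← Module.Flat.lTensor_exact B (exact_subtype_nilradical hR), RingHom.mem_ker,
    ← AlgHom.toLinearMap_apply, tensorAugmentation_toLinearMap, LinearMap.comp_apply,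
    LinearEquiv.coe_coe, LinearEquiv.map_eq_zero_iff]

theorem isNilpotent_lTensor_subtype_nilradical (w : B ⊗[k] (nilradical R).restrictScalars k) :
    IsNilpotent (LinearMap.lTensor B ((nilradical R).restrictScalars k).subtype w) := by
  induction w using TensorProduct.induction_on with
  | zero => simp
  | tmul b n =>
    obtain ⟨m, hm⟩ := mem_nilradical.mp n.2
    exact ⟨m, by simp [Algebra.TensorProduct.tmul_pow, hm]⟩
  | add w w' hw hw' => simpa using (Commute.all _ _).isNilpotent_add hw hw'

theorem ker_tensorAugmentation_le_nilradical
    (hR : ∀ x : R, IsNilpotent (x - algebraMap k R (ρ x))) :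
    RingHom.ker (tensorAugmentation ρ B) ≤ nilradical (B ⊗[k] R) := fun t ht => by
  obtain ⟨w, rfl⟩ := (mem_ker_tensorAugmentation_iff hR t).mp ht
  exact mem_nilradical.mpr (isNilpotent_lTensor_subtype_nilradical w)

theorem map_lTensor_subtype (f : A →ₐ[k] K) (N : Submodule k R) (w : A ⊗[k] N) :
    Algebra.TensorProduct.map f (AlgHom.id k R) (LinearMap.lTensor A N.subtype w) =
      LinearMap.lTensor K N.subtype (LinearMap.rTensor N f.toLinearMap w) := by
  induction w using TensorProduct.induction_on with
  | zero => simp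
  | tmul a n => simp
  | add w w' hw hw' => simp [hw, hw']

theorem rTensor_mkQ_eq_zero_iff (hR : ∀ x : R, IsNilpotent (x - algebraMap k R (ρ x)))
    (f : A →ₐ[k] K) (w : K ⊗[k] (nilradical R).restrictScalars k) :
    LinearMap.rTensor _ (LinearMap.range f.toLinearMap).mkQ w = 0 ↔
      ∃ b ∈ RingHom.ker (tensorAugmentation ρ A),
        Algebra.TensorProduct.map f (AlgHom.id k R) b =
          LinearMap.lTensor K ((nilradical R).restrictScalars k).subtype w := by
  rw [rTensor_exact _ (LinearMap.exact_map_mkQ_range _) (Submodule.mkQ_surjective _) w]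
  constructor
  · rintro ⟨w', rfl⟩
    exact ⟨_, (mem_ker_tensorAugmentation_iff hR _).mpr ⟨w', rfl⟩, map_lTensor_subtype f _ w'⟩
  · rintro ⟨b, hb, hbw⟩
    obtain ⟨w', rfl⟩ := (mem_ker_tensorAugmentation_iff hR b).mp hb
    exact ⟨w', Module.Flat.lTensor_preserves_injective_linearMap _ (Submodule.injective_subtype _)
      ((map_lTensor_subtype f _ w').symm.trans hbw)⟩

end TensorAugmentation

theorem inf_div_iso_lieDiv_tensor_nil_general
    (k A K R : Type*) [Field k] [CharZero k]
    [CommRing A] [Algebra k A]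
    [CommRing K] [Algebra k K] [Algebra A K] [IsScalarTower k A K]
    -- K is the total quotient ring of A
    (hK : IsLocalization (nonZeroDivisors A) K)
    [CommRing R] [Algebra k R]
    -- R is of the form k + Nil(R): the augmentation ρ has nilpotent "kernel"
    (ρ : R →ₐ[k] k) (hR : ∀ x : R, IsNilpotent (x - algebraMap k R (ρ x)))
    -- ι : A ⊗ R → K ⊗ R, ε : K ⊗ R → K the augmentation (via ρ)
    (ι : (A ⊗[k] R) →ₐ[k] (K ⊗[k] R))
    (hι : ι = Algebra.TensorProduct.map (IsScalarTower.toAlgHom k A K)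
      (AlgHom.id k R))
    (ε : (K ⊗[k] R) →ₐ[k] K)
    (hε : ε = (Algebra.TensorProduct.rid k k K).toAlgHom.comp
      (Algebra.TensorProduct.map (AlgHom.id k K) ρ)) :
    ∃ φ : ((K ⊗[k] R)ˣ ⧸ (Units.map (ι : (A ⊗[k] R) →* (K ⊗[k] R))).range) →*
        (Kˣ ⧸ (Units.map ((algebraMap A K : A →+* K) : A →* K)).range),
      (∀ u : (K ⊗[k] R)ˣ,
        φ (QuotientGroup.mk u) =
          QuotientGroup.mk (Units.map (ε : (K ⊗[k] R) →* K) u)) ∧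
      Nonempty (↥φ.ker ≃*
        Multiplicative
          ((K ⧸ LinearMap.range (IsScalarTower.toAlgHom k A K).toLinearMap)
            ⊗[k] ↥((nilradical R).restrictScalars k))) := by
  subst hι hε
  let : Module ℚ (A ⊗[k] R) := Module.compHom _ (algebraMap ℚ k)
  let : Module ℚ (K ⊗[k] R) := Module.compHom _ (algebraMap ℚ k)
  have hcomm := congrArg AlgHom.toRingHom
    (tensorAugmentation_comp_map (ρ := ρ) (IsScalarTower.toAlgHom k A K))
  refine ⟨unitsCokernelMap _ _ _ (algebraMap A K) hcomm, fun _ => rfl, ?_⟩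
  exact nonempty_ker_unitsCokernelMap_mulEquiv hcomm
    (IsLocalization.injective (M := nonZeroDivisors A) K le_rfl)
    tensorAugmentation_unitsMap_surjective
    (ker_tensorAugmentation_le_nilradical hR) (ker_tensorAugmentation_le_nilradical hR)
    _ (mem_ker_tensorAugmentation_iff hR)
    _ (LinearMap.rTensor_surjective _ (Submodule.mkQ_surjective _)) (rTensor_mkQ_eq_zero_iff hR _)

theorem inf_div_iso_lieDiv_tensor_nil
    (k A K R : Type*) [Field k] [CharZero k]
    [CommRing A] [IsNoetherianRing A] [Algebra k A]
    [CommRing K] [Algebra k K] [Algebra A K] [IsScalarTower k A K]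
    -- K is the total quotient ring of A
    (hK : IsLocalization (nonZeroDivisors A) K)
    [CommRing R] [Algebra k R]
    -- R is of the form k + Nil(R): the augmentation ρ has nilpotent "kernel"
    (ρ : R →ₐ[k] k) (hR : ∀ x : R, IsNilpotent (x - algebraMap k R (ρ x)))
    -- ι : A ⊗ R → K ⊗ R, ε : K ⊗ R → K the augmentation (via ρ)
    (ι : (A ⊗[k] R) →ₐ[k] (K ⊗[k] R))
    (hι : ι = Algebra.TensorProduct.map (IsScalarTower.toAlgHom k A K)
      (AlgHom.id k R))
    (ε : (K ⊗[k] R) →ₐ[k] K)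
    (hε : ε = (Algebra.TensorProduct.rid k k K).toAlgHom.comp
      (Algebra.TensorProduct.map (AlgHom.id k K) ρ)) :
    ∃ φ : ((K ⊗[k] R)ˣ ⧸ (Units.map (ι : (A ⊗[k] R) →* (K ⊗[k] R))).range) →*
        (Kˣ ⧸ (Units.map ((algebraMap A K : A →+* K) : A →* K)).range),
      (∀ u : (K ⊗[k] R)ˣ,
        φ (QuotientGroup.mk u) =
          QuotientGroup.mk (Units.map (ε : (K ⊗[k] R) →* K) u)) ∧
      Nonempty (↥φ.ker ≃*
        Multiplicative
          ((K ⧸ LinearMap.range (IsScalarTower.toAlgHom k A K).toLinearMap)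
            ⊗[k] ↥((nilradical R).restrictScalars k))) :=
  inf_div_iso_lieDiv_tensor_nil_general k A K R hK ρ hR ι hι ε hε
end

section
/- Let C be a projective curve over an algebraically closed field k of characteristic 0 with normalization π : Z → C. Define Div⁰_{Z/C}(k) as the kernel of Div⁰_Z(k) → WDiv(Z) → WDiv(C) (Cartier-to-Weil followed by proper push-forward of cycles) and Lie(Div⁰_{Z/C}) as the kernel of Lie(Div⁰_Z) → LDiv(Z) → LDiv(C). Then Div⁰_{Z/C}(k) is a free abelian group of finite rank and Lie(Div⁰_{Z/C}) is a finite-dimensional k-vector space; consequently these data determine a formal subgroup Div⁰_{Z/C} of Div⁰_Z. -/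
/- STATEMENT 19: Let C be a projective curve over an algebraically closed
field k of characteristic 0 with normalization π : Z → C.  Define
Div⁰_{Z/C}(k) = ker(Div⁰_Z(k) → WDiv(Z) → WDiv(C)) and
Lie(Div⁰_{Z/C}) = ker(Lie(Div⁰_Z) → LDiv(Z) → LDiv(C)).  Then Div⁰_{Z/C}(k)
is a free abelian group of finite rank and Lie(Div⁰_{Z/C}) is a
finite-dimensional k-vector space (consequently these data determine a
formal subgroup Div⁰_{Z/C} of Div⁰_Z).  Model: Z normal, so Div_Z(k) ≅
WDiv(Z) = Z →₀ ℤ; Div⁰ means degree 0 on every connected component; the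
push-forward of cycles is Finsupp.mapDomain π; π is injective away from the
finite preimage S of the singular locus.  The Lie part is modelled as in the
residue/adic model: Lie(Div_Z) = ⊕_q K̂_q/Ô_q via Laurent series, Ô_{C,p}
via its image A p ⊆ Π_{q→p} k[[t]] of finite codimension. -/

open PowerSeries DirectSum

/-- Laurent series with coefficients vanishing below `ν`. -/
noncomputable def lowSupp (k : Type*) [Field k] (ν : ℤ) :
    Submodule k (LaurentSeries k) where
  carrier := {f | ∀ n, n < ν → f.coeff n = 0}
  add_mem' := by
    intro a b ha hb n hn
    simp [HahnSeries.coeff_add, ha n hn, hb n hn]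
  zero_mem' := by intro n hn; simp
  smul_mem' := by
    intro c a ha n hn
    simp [HahnSeries.coeff_smul, ha n hn]

/-! Away from `S` the map `π` is injective and `OC (π q)` is all of `k⟦X⟧`, so relative divisors
and relative Lie vectors vanish there. A divisor in `A` is therefore determined by its values on
the finite set `S`: `A` embeds in `ℤ^S` and is free of finite rank.

For the Lie part, pair a polar part `f` with `g` in the maximal ideal `𝔪` of `∏ k⟦X⟧` by
`Res (f · dg)`. In characteristic `0` the derivatives of the `X ^ (n + 1)` reach every monomial,
so this pairing is nondegenerate; elements of `V` pair to zero with `OC p ∩ 𝔪`, which has finite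
codimension in `𝔪`, so `V` embeds in the finite-dimensional `∏_{s ∈ S} (𝔪 / (OC (π s) ∩ 𝔪))^*`. -/

theorem Finsupp.mapDomain_apply_of_forall_eq {α β M : Type*} [AddCommMonoid M] {f : α → β}
    (x : α →₀ M) {a : α} (ha : ∀ a', f a' = f a → a' = a) : x.mapDomain f (f a) = x a := by
  classical
  rw [mapDomain_apply_eq_sum]
  exact Finset.sum_eq_single a (fun b hb hba => absurd (ha b (Finset.mem_filter.mp hb).2) hba)
    fun h => by simpa using h

theorem exists_addEquiv_fin_pi_int_of_injective {M σ : Type*} [AddCommGroup M] [Finite σ]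
    (f : M →+ (σ → ℤ)) (hf : Function.Injective f) : ∃ n : ℕ, Nonempty (M ≃+ (Fin n → ℤ)) := by
  obtain ⟨n, b⟩ := Submodule.basisOfPid (Pi.basisFun ℤ σ) (LinearMap.range f.toIntLinearMap)
  exact ⟨n, ⟨((LinearEquiv.ofInjective _ hf).trans b.equivFun).toAddEquiv⟩⟩

theorem AddSubgroup.exists_addEquiv_fin_pi_int_of_apply_eq_zero {Z : Type*}
    (A : AddSubgroup (Z →₀ ℤ)) (S : Finset Z) (hA : ∀ D ∈ A, ∀ q ∉ S, D q = 0) :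
    ∃ n : ℕ, Nonempty (A ≃+ (Fin n → ℤ)) := by
  refine exists_addEquiv_fin_pi_int_of_injective
    (AddMonoidHom.mk' (fun D (s : S) => (D : Z →₀ ℤ) s) fun _ _ => rfl)
    ((injective_iff_map_eq_zero _).mpr fun D hD => Subtype.ext (Finsupp.ext fun q => ?_))
  by_cases hq : q ∈ S
  · exact congr_fun hD ⟨q, hq⟩
  · exact hA D D.2 q hq

theorem Submodule.finiteDimensional_quotient_comap_subtype {K V : Type*} [DivisionRing K]
    [AddCommGroup V] [Module K V] (p N : Submodule K V) [FiniteDimensional K (V ⧸ N)] :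
    FiniteDimensional K (p ⧸ N.comap p.subtype) :=
  .of_injective ((N.comap p.subtype).mapQ N p.subtype le_rfl) <| by
    rw [← LinearMap.ker_eq_bot, Submodule.ker_mapQ, Submodule.mkQ_map_self]

theorem Submodule.finiteDimensional_comap_of_injective {K V W : Type*} [DivisionRing K]
    [AddCommGroup V] [Module K V] [AddCommGroup W] [Module K W] {f : V →ₗ[K] W}
    (hf : Function.Injective f) (p : Submodule K W) [FiniteDimensional K p] :
    FiniteDimensional K (p.comap f) :=
  .of_injective (f.restrict fun _ h => h) fun _ _ hxy => Subtype.ext (hf congr(($hxy).1))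

section Residue

variable {k : Type*} [Field k]

noncomputable def residueForm : LaurentSeries k →ₗ[k] k⟦X⟧ →ₗ[k] k :=
  LinearMap.mk₂ k (fun f u => (f * u).coeff (-1))
    (fun f f' u => by rw [add_mul, HahnSeries.coeff_add])
    (fun c f u => by
      rw [← HahnSeries.C_mul_eq_smul, mul_assoc, HahnSeries.C_mul_eq_smul, HahnSeries.coeff_smul,
        smul_eq_mul])
    (fun f u u' => by rw [map_add, mul_add, HahnSeries.coeff_add])
    (fun c f u => by
      rw [PowerSeries.coe_smul, ← HahnSeries.C_mul_eq_smul, mul_left_comm,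
        HahnSeries.C_mul_eq_smul, HahnSeries.coeff_smul, smul_eq_mul])

theorem residueForm_apply (f : LaurentSeries k) (u : k⟦X⟧) :
    residueForm f u = (f * u).coeff (-1) := rfl

theorem residueForm_X_pow (f : LaurentSeries k) (n : ℕ) :
    residueForm f (X ^ n) = f.coeff (-(n + 1)) := by
  rw [residueForm_apply, HahnSeries.ofPowerSeries_X_pow,
    show (-1 : ℤ) = -(n + 1) + n by ring, HahnSeries.coeff_mul_single_add, mul_one]

theorem lowSupp_le_ker_residueForm : lowSupp k 0 ≤ LinearMap.ker (residueForm (k := k)) := by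
  intro f hf
  refine LinearMap.mem_ker.mpr (LinearMap.ext fun u => ?_)
  rw [residueForm_apply, LinearMap.zero_apply, HahnSeries.coeff_mul]
  refine Finset.sum_eq_zero fun ij hij => ?_
  obtain ⟨-, -, hsum⟩ := Finset.mem_antidiagonal.mp hij
  rcases lt_or_ge ij.1 0 with h | h
  · rw [hf ij.1 h, zero_mul]
  · rw [PowerSeries.coeff_coe, if_pos (by omega), mul_zero]

noncomputable def residuePairing : (LaurentSeries k ⧸ lowSupp k 0) →ₗ[k] k⟦X⟧ →ₗ[k] k :=
  (lowSupp k 0).liftQ residueForm lowSupp_le_ker_residueForm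

theorem residuePairing_mk (f : LaurentSeries k) (u : k⟦X⟧) :
    residuePairing ((lowSupp k 0).mkQ f) u = residueForm f u := rfl

theorem eq_zero_of_residuePairing_derivative_X_pow [CharZero k] (x : LaurentSeries k ⧸ lowSupp k 0)
    (h : ∀ n : ℕ, residuePairing x (d⁄dX k (X ^ (n + 1))) = 0) : x = 0 := by
  obtain ⟨f, rfl⟩ := (lowSupp k 0).mkQ_surjective x
  refine (Submodule.Quotient.mk_eq_zero _).mpr fun i hi => ?_
  obtain ⟨n, rfl⟩ : ∃ n : ℕ, i = -(n + 1) := ⟨(-i - 1).toNat, by omega⟩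
  have hn := h n
  rw [Derivation.leibniz_pow, derivative_X, smul_eq_mul, mul_one, Nat.add_sub_cancel, map_nsmul,
    residuePairing_mk, residueForm_X_pow, nsmul_eq_mul, mul_eq_zero] at hn
  exact hn.resolve_left (Nat.cast_ne_zero.mpr n.succ_ne_zero)

section Fiber

variable (α : Type*)

noncomputable def vanishingAtZero : Submodule k (α → k⟦X⟧) :=
  Submodule.pi Set.univ fun _ => LinearMap.ker (coeff 0)

variable {α} in
theorem mem_vanishingAtZero {g : α → k⟦X⟧} :
    g ∈ vanishingAtZero α ↔ ∀ q, constantCoeff (g q) = 0 := by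
  simp [vanishingAtZero, Submodule.mem_pi]

variable [Fintype α]

noncomputable def fiberPairing :
    (α → LaurentSeries k ⧸ lowSupp k 0) →ₗ[k] Module.Dual k (vanishingAtZero (k := k) α) :=
  (∑ q : α, (residuePairing.compl₂ (d⁄dX k).toLinearMap).compl₁₂
    (LinearMap.proj q) (LinearMap.proj q)).compl₂ (vanishingAtZero α).subtype

variable {α} in
theorem fiberPairing_apply (ε : α → LaurentSeries k ⧸ lowSupp k 0) (g : vanishingAtZero α) :
    fiberPairing α ε g = ∑ q, residuePairing (ε q) (d⁄dX k (g.1 q)) := by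
  simp [fiberPairing]

theorem fiberPairing_injective [CharZero k] : Function.Injective (fiberPairing (k := k) α) := by
  classical
  refine (injective_iff_map_eq_zero _).mpr fun ε hε => funext fun q => ?_
  refine eq_zero_of_residuePairing_derivative_X_pow _ fun n => ?_
  have hg : Pi.single q (X ^ (n + 1)) ∈ vanishingAtZero (k := k) α := by
    refine mem_vanishingAtZero.mpr fun q' => ?_
    rcases eq_or_ne q' q with rfl | hq'
    · simp
    · simp [hq']
  have := LinearMap.congr_fun hε ⟨_, hg⟩
  rwa [fiberPairing_apply, Fintype.sum_eq_single q fun q' hq' => by simp [hq'],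
    LinearMap.zero_apply, Submodule.coe_mk, Pi.single_eq_same] at this

noncomputable def residueAnnihilator (N : Submodule k (α → k⟦X⟧)) :
    Submodule k (α → LaurentSeries k ⧸ lowSupp k 0) :=
  (N.comap (vanishingAtZero α).subtype).dualAnnihilator.comap (fiberPairing α)

variable {α} in
theorem mem_residueAnnihilator_iff {N : Submodule k (α → k⟦X⟧)}
    {ε : α → LaurentSeries k ⧸ lowSupp k 0} (F : α → LaurentSeries k)
    (hF : ∀ q, (lowSupp k 0).mkQ (F q) = ε q) :
    ε ∈ residueAnnihilator α N ↔ ∀ g ∈ N, (∀ q, constantCoeff (g q) = 0) →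
      ∑ q, (F q * (d⁄dX k (g q) : LaurentSeries k)).coeff (-1) = 0 := by
  simp only [residueAnnihilator, Submodule.mem_comap, Submodule.mem_dualAnnihilator,
    Subtype.forall, fiberPairing_apply, mem_vanishingAtZero, ← hF, residuePairing_mk,
    residueForm_apply]
  exact ⟨fun h g hN h0 => h g h0 hN, fun h g h0 hN => h g hN h0⟩

theorem residueAnnihilator_top [CharZero k] : residueAnnihilator (k := k) α ⊤ = ⊥ := by
  rw [residueAnnihilator, Submodule.comap_top, Submodule.dualAnnihilator_top, Submodule.comap_bot,
    LinearMap.ker_eq_bot.mpr (fiberPairing_injective α)]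

theorem finiteDimensional_residueAnnihilator [CharZero k]
    (N : Submodule k (α → k⟦X⟧)) [FiniteDimensional k ((α → k⟦X⟧) ⧸ N)] :
    FiniteDimensional k (residueAnnihilator α N) := by
  have := (vanishingAtZero α).finiteDimensional_quotient_comap_subtype N
  have := Module.Finite.equiv (N.comap (vanishingAtZero α).subtype).dualQuotEquivDualAnnihilator
  exact Submodule.finiteDimensional_comap_of_injective (fiberPairing_injective α) _

end Fiber

theorem finite_of_fiber_mem_residueAnnihilator [CharZero k] {Z C : Type*} (π : Z → C)
    [∀ p, Fintype {q // π q = p}] (S : Finset Z) (hinj : ∀ q ∉ S, ∀ q', π q' = π q → q' = q)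
    (N : ∀ p, Submodule k ({q // π q = p} → k⟦X⟧))
    [∀ p, FiniteDimensional k (({q // π q = p} → k⟦X⟧) ⧸ N p)]
    (hN : ∀ p, (∀ q : {q // π q = p}, q.1 ∉ S) → N p = ⊤)
    (V : Submodule k (⨁ _ : Z, LaurentSeries k ⧸ lowSupp k 0))
    (hV : ∀ δ ∈ V, ∀ p, (fun q : {q // π q = p} => δ q.1) ∈ residueAnnihilator _ (N p)) :
    Module.Finite k V := by
  have := fun s : S => finiteDimensional_residueAnnihilator {q // π q = π s} (N (π s))
  let Φ : V →ₗ[k] ∀ s : S, residueAnnihilator {q // π q = π s} (N (π s)) :=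
    LinearMap.pi fun s => LinearMap.codRestrict _
      ((LinearMap.pi fun q =>
        DirectSum.component k Z (fun _ => LaurentSeries k ⧸ lowSupp k 0) q.1) ∘ₗ V.subtype)
      fun δ => hV δ δ.2 (π s)
  have hvanish (δ : V) (q : Z) (hq : q ∉ S) : δ.1 q = 0 := by
    have hmem := hV δ δ.2 (π q)
    rw [hN (π q) fun q' => (hinj q hq q'.1 q'.2).symm ▸ hq, residueAnnihilator_top,
      Submodule.mem_bot] at hmem
    exact congr_fun hmem ⟨q, rfl⟩
  have : IsNoetherian k (∀ s : S, residueAnnihilator {q // π q = π s} (N (π s))) :=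
    IsNoetherian.iff_fg.mpr inferInstance
  refine .of_injective Φ fun δ δ' h => Subtype.ext (DFinsupp.ext fun q => ?_)
  by_cases hq : q ∈ S
  · exact congr_fun congr(($(congr_fun h ⟨q, hq⟩)).1) ⟨q, rfl⟩
  · rw [hvanish δ q hq, hvanish δ' q hq]

end Residue

theorem div_zero_relative_is_formal_group_data_general
    (k : Type) [Field k] [CharZero k]
    (Z C : Type) (π : Z → C) [∀ p, Fintype {q // π q = p}]
    (S : Finset Z)  -- preimage of the singular locus of C
    (hinj : ∀ q ∉ S, ∀ q', π q' = π q → q' = q)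
    (ι : Type) (comp : Z → ι)  -- connected components of Z
    -- the k-points part: A = ker(Div⁰_Z(k) → WDiv(Z) → WDiv(C))
    (A : AddSubgroup (Z →₀ ℤ))
    (hA : ∀ D : Z →₀ ℤ, D ∈ A ↔
      ((∀ i : ι, ∑ᶠ q ∈ ({q | comp q = i} : Set Z), D q = 0) ∧
        Finsupp.mapDomain π D = 0))
    -- the Lie part, as in the adic/residue model
    (OC : ∀ p : C, Subalgebra k ({q // π q = p} → PowerSeries k))
    (hfd : ∀ p, FiniteDimensional k
      (({q // π q = p} → PowerSeries k) ⧸ Subalgebra.toSubmodule (OC p)))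
    (hiso : ∀ p : C, (∀ q : {q // π q = p}, q.1 ∉ S) → OC p = ⊤)
    (V : Submodule k (⨁ _q : Z, (LaurentSeries k ⧸ lowSupp k 0)))
    (hV : ∀ δ, δ ∈ V ↔ ∀ (p : C) (g : {q // π q = p} → PowerSeries k),
      g ∈ OC p → (∀ q, constantCoeff (R := k) (g q) = 0) →
      ∀ F : Z → LaurentSeries k, (∀ q : Z, (lowSupp k 0).mkQ (F q) = δ q) →
      ∑ q : {q // π q = p},
        (F q.1 * ((derivativeFun (g q) : PowerSeries k) :
          LaurentSeries k)).coeff (-1) = 0) :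
    -- Div⁰_{Z/C}(k) is free abelian of finite rank
    (∃ n : ℕ, Nonempty (↥A ≃+ (Fin n → ℤ))) ∧
    -- Lie(Div⁰_{Z/C}) is a finite-dimensional k-vector space
    Module.Finite k ↥V := by
  refine ⟨A.exists_addEquiv_fin_pi_int_of_apply_eq_zero S fun D hD q hq => ?_, ?_⟩
  · rw [← Finsupp.mapDomain_apply_of_forall_eq D (hinj q hq), ((hA D).1 hD).2, Finsupp.zero_apply]
  · have := hfd
    refine finite_of_fiber_mem_residueAnnihilator π S hinj
      (fun p => Subalgebra.toSubmodule (OC p))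
      (fun p hp => by rw [hiso p hp, Algebra.top_toSubmodule]) V fun δ hδ p => ?_
    choose F hF using fun q => (lowSupp k 0).mkQ_surjective (δ q)
    refine (mem_residueAnnihilator_iff (fun q => F q.1) fun q => hF q.1).mpr fun g hg h0 => ?_
    exact (hV δ).1 hδ p g hg h0 F hF

theorem div_zero_relative_is_formal_group_data
    (k : Type) [Field k] [IsAlgClosed k] [CharZero k]
    (Z C : Type) [DecidableEq Z] (π : Z → C) [∀ p, Fintype {q // π q = p}]
    (S : Finset Z)  -- preimage of the singular locus of C
    (hinj : ∀ q ∉ S, ∀ q', π q' = π q → q' = q)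
    (ι : Type) (comp : Z → ι)  -- connected components of Z
    -- the k-points part: A = ker(Div⁰_Z(k) → WDiv(Z) → WDiv(C))
    (A : AddSubgroup (Z →₀ ℤ))
    (hA : ∀ D : Z →₀ ℤ, D ∈ A ↔
      ((∀ i : ι, ∑ᶠ q ∈ ({q | comp q = i} : Set Z), D q = 0) ∧
        Finsupp.mapDomain π D = 0))
    -- the Lie part, as in the adic/residue model
    (m : Ideal (PowerSeries k)) (hm : m = Ideal.span {X})
    (OC : ∀ p : C, Subalgebra k ({q // π q = p} → PowerSeries k))
    (hfd : ∀ p, FiniteDimensional k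
      (({q // π q = p} → PowerSeries k) ⧸ Subalgebra.toSubmodule (OC p)))
    (hiso : ∀ p : C, (∀ q : {q // π q = p}, q.1 ∉ S) → OC p = ⊤)
    (V : Submodule k (⨁ _q : Z, (LaurentSeries k ⧸ lowSupp k 0)))
    (hV : ∀ δ, δ ∈ V ↔ ∀ (p : C) (g : {q // π q = p} → PowerSeries k),
      g ∈ OC p → (∀ q, constantCoeff (R := k) (g q) = 0) →
      ∀ F : Z → LaurentSeries k, (∀ q : Z, (lowSupp k 0).mkQ (F q) = δ q) →
      ∑ q : {q // π q = p},
        (F q.1 * ((derivativeFun (g q) : PowerSeries k) :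
          LaurentSeries k)).coeff (-1) = 0) :
    -- Div⁰_{Z/C}(k) is free abelian of finite rank
    (∃ n : ℕ, Nonempty (↥A ≃+ (Fin n → ℤ))) ∧
    -- Lie(Div⁰_{Z/C}) is a finite-dimensional k-vector space
    Module.Finite k ↥V :=
  div_zero_relative_is_formal_group_data_general k Z C π S hinj ι comp A hA OC hfd hiso V hV
end
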